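/- arXiv:math/0209362 — 2 statements merged into one kernel-verified Lean document; each statement's English description precedes it below -/
import Mathlib

section
/- Let 𝕜 be a complete nontrivially normed field (for instance a finite extension of ℚ_p) and let E, F, G be Banach spaces over 𝕜. Let U ⊆ E and V ⊆ F be open sets, u₀ ∈ U, and let f : E × F → G be analytic on U × V. Then the map V → (E →L[𝕜] G) sending x to the Fréchet derivative at u₀ of the function u ↦ f(u, x) is analytic on V. -/
open Filter ContinuousLinearMap

section PartialFDeriv

variable {𝕜 : Type*} [NontriviallyNormedField 𝕜]
  {E F G : Type*} [NormedAddCommGroup E] [NormedSpace 𝕜 E]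
  [NormedAddCommGroup F] [NormedSpace 𝕜 F] [NormedAddCommGroup G] [NormedSpace 𝕜 G]

theorem fderiv_comp_prodMk_left {f : E × F → G} {u₀ : E} {x : F}
    (hf : DifferentiableAt 𝕜 f (u₀, x)) :
    fderiv 𝕜 (fun u : E => f (u, x)) u₀ = (fderiv 𝕜 f (u₀, x)).comp (inl 𝕜 E F) :=
  (hf.hasFDerivAt.comp u₀ (hasFDerivAt_prodMk_left u₀ x)).fderiv

/-- Near `x`, the partial derivative is the image of `fderiv 𝕜 f (u₀, ·)` under the continuous
linear map `L ↦ L ∘ inl`, and both factors are analytic. -/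
theorem AnalyticAt.fderiv_comp_prodMk_left [CompleteSpace G] {f : E × F → G} {u₀ : E} {x : F}
    (hf : AnalyticAt 𝕜 f (u₀, x)) :
    AnalyticAt 𝕜 (fun y : F => fderiv 𝕜 (fun u : E => f (u, y)) u₀) x := by
  have hslice : Tendsto (fun y : F => (u₀, y)) (nhds x) (nhds (u₀, x)) :=
    (continuous_const.prodMk continuous_id).tendsto x
  have hpartial : (fun y : F => (compL 𝕜 E (E × F) G).flip (inl 𝕜 E F) (fderiv 𝕜 f (u₀, y)))
      =ᶠ[nhds x] fun y => fderiv 𝕜 (fun u : E => f (u, y)) u₀ := by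
    filter_upwards [hslice.eventually hf.eventually_analyticAt] with y hy
    exact (_root_.fderiv_comp_prodMk_left hy.differentiableAt).symm
  refine AnalyticAt.congr ?_ hpartial
  exact (ContinuousLinearMap.analyticAt _ _).comp
    (hf.fderiv.comp (analyticAt_const.prod analyticAt_id))

end PartialFDeriv

theorem analyticOnNhd_fderiv_in_first_variable_general
    {𝕜 : Type*} [NontriviallyNormedField 𝕜]
    {E F G : Type*}
    [NormedAddCommGroup E] [NormedSpace 𝕜 E]
    [NormedAddCommGroup F] [NormedSpace 𝕜 F]
    [NormedAddCommGroup G] [NormedSpace 𝕜 G] [CompleteSpace G]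
    {U : Set E} {V : Set F}
    {u₀ : E} (hu₀ : u₀ ∈ U)
    {f : E × F → G} (hf : AnalyticOnNhd 𝕜 f (U ×ˢ V)) :
    AnalyticOnNhd 𝕜 (fun x : F => fderiv 𝕜 (fun u : E => f (u, x)) u₀) V :=
  fun x hx => (hf (u₀, x) ⟨hu₀, hx⟩).fderiv_comp_prodMk_left

/-- If `f : E × F → G` is analytic on `U × V` (Banach spaces over a complete nontrivially
normed field `𝕜`, `U`, `V` open, `u₀ ∈ U`), then the map sending `x ∈ V` to the Fréchet
derivative at `u₀` of `u ↦ f (u, x)` is analytic on `V`. -/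
theorem analyticOnNhd_fderiv_in_first_variable
    {𝕜 : Type*} [NontriviallyNormedField 𝕜] [CompleteSpace 𝕜]
    {E F G : Type*}
    [NormedAddCommGroup E] [NormedSpace 𝕜 E] [CompleteSpace E]
    [NormedAddCommGroup F] [NormedSpace 𝕜 F] [CompleteSpace F]
    [NormedAddCommGroup G] [NormedSpace 𝕜 G] [CompleteSpace G]
    {U : Set E} {V : Set F} (hU : IsOpen U) (hV : IsOpen V)
    {u₀ : E} (hu₀ : u₀ ∈ U)
    {f : E × F → G} (hf : AnalyticOnNhd 𝕜 f (U ×ˢ V)) :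
    AnalyticOnNhd 𝕜 (fun x : F => fderiv 𝕜 (fun u : E => f (u, x)) u₀) V :=
  analyticOnNhd_fderiv_in_first_variable_general hu₀ hf
end

section
/- Let p and ℓ be distinct prime numbers, K a finite extension of ℚ_ℓ, and ρ : K^× → ℚ_p a continuous homomorphism. If ρ(π) = 0 for some uniformizer π of K (an element with 0 < |π| < 1 generating the value group |K^×|), then ρ is identically zero. -/
/-!
Write `x = u * π ^ n` with `‖u‖ = 1`; it suffices that `ρ u = 0`. Since `K` is locally compact,
some power `v = u ^ m` (`m > 0`) satisfies `‖v - 1‖ < 1`, and then `v ^ ℓ ^ k → 1`: writing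
`v ^ ℓ - 1 = (v - 1) * ∑ i < ℓ, v ^ i`, the ultrametric inequality gives
`‖v ^ ℓ - 1‖ ≤ max ‖ℓ‖ ‖v - 1‖ * ‖v - 1‖`, and `‖ℓ‖ < 1` in `K`. By continuity
`ρ (v ^ ℓ ^ k) = ℓ ^ k * m * ρ u → 0`, but `ℓ` is a unit of `ℚ_p`, so this sequence has constant
norm `‖m * ρ u‖`, which must therefore vanish.
-/

open Filter Topology

section NormedAlgebra

variable {𝕜 K : Type*}

abbrev normedAlgebraOfNormAlgebraMap [NormedField 𝕜] [SeminormedRing K] [Algebra 𝕜 K]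
    (h : ∀ a : 𝕜, ‖algebraMap 𝕜 K a‖ = ‖a‖) : NormedAlgebra 𝕜 K where
  norm_smul_le a x := by rw [Algebra.smul_def, ← h]; exact norm_mul_le _ _

theorem isUltrametricDist_of_norm_algebraMap [NormedField 𝕜] [IsUltrametricDist 𝕜]
    [NormedDivisionRing K] [Algebra 𝕜 K] (h : ∀ a : 𝕜, ‖algebraMap 𝕜 K a‖ = ‖a‖) :
    IsUltrametricDist K :=
  letI := normedAlgebraOfNormAlgebraMap h
  IsUltrametricDist.of_normedAlgebra 𝕜

theorem properSpace_of_norm_algebraMap [NontriviallyNormedField 𝕜] [LocallyCompactSpace 𝕜]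
    [NormedRing K] [Algebra 𝕜 K] [FiniteDimensional 𝕜 K]
    (h : ∀ a : 𝕜, ‖algebraMap 𝕜 K a‖ = ‖a‖) : ProperSpace K :=
  letI := normedAlgebraOfNormAlgebraMap h
  FiniteDimensional.proper 𝕜 K

end NormedAlgebra

section PowNearOne

variable {K : Type*} [NormedDivisionRing K] [IsUltrametricDist K]

theorem norm_pow_sub_one_le_of_norm_sub_one_le {x : K} {t : ℝ} (hx : ‖x - 1‖ ≤ t) (ht : t ≤ 1)
    (n : ℕ) : ‖x ^ n - 1‖ ≤ t := by
  induction n with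
  | zero => simpa using (norm_nonneg _).trans hx
  | succ n ih =>
    have hx1 : ‖x‖ ≤ 1 := by
      simpa using (IsUltrametricDist.norm_add_le_max (x - 1) 1).trans
        (max_le (hx.trans ht) norm_one.le)
    calc ‖x ^ (n + 1) - 1‖ = ‖x ^ n * (x - 1) + (x ^ n - 1)‖ := by
          rw [pow_succ]; congr 1; noncomm_ring
      _ ≤ max (‖x‖ ^ n * ‖x - 1‖) ‖x ^ n - 1‖ := by
        rw [← norm_pow, ← norm_mul]; exact IsUltrametricDist.norm_add_le_max _ _
      _ ≤ t := max_le ((mul_le_of_le_one_left (norm_nonneg _)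
        (pow_le_one₀ (norm_nonneg _) hx1)).trans hx) ih

theorem norm_pow_sub_one_le_max_mul {x : K} {t : ℝ} (hx : ‖x - 1‖ ≤ t) (ht : t ≤ 1) (q : ℕ) :
    ‖x ^ q - 1‖ ≤ max ‖(q : K)‖ t * ‖x - 1‖ := by
  have hsum : ‖∑ i ∈ Finset.range q, x ^ i‖ ≤ max ‖(q : K)‖ t := by
    have hdev : ‖∑ i ∈ Finset.range q, (x ^ i - 1)‖ ≤ t :=
      IsUltrametricDist.norm_sum_le_of_forall_le_of_nonneg ((norm_nonneg _).trans hx)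
        fun i _ => norm_pow_sub_one_le_of_norm_sub_one_le hx ht i
    calc ‖∑ i ∈ Finset.range q, x ^ i‖ = ‖(q : K) + ∑ i ∈ Finset.range q, (x ^ i - 1)‖ := by
          simp
      _ ≤ max ‖(q : K)‖ t := (IsUltrametricDist.norm_add_le_max _ _).trans (max_le_max le_rfl hdev)
  rw [← geom_sum_mul, norm_mul]
  exact mul_le_mul_of_nonneg_right hsum (norm_nonneg _)

theorem norm_pow_pow_sub_one_le {x : K} (hx : ‖x - 1‖ ≤ 1) (q k : ℕ) :
    ‖x ^ q ^ k - 1‖ ≤ max ‖(q : K)‖ ‖x - 1‖ ^ k * ‖x - 1‖ := by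
  induction k with
  | zero => simp
  | succ k ih =>
    have hc : max ‖(q : K)‖ ‖x - 1‖ ≤ 1 :=
      max_le (IsUltrametricDist.norm_natCast_le_one K q) hx
    have hk : ‖x ^ q ^ k - 1‖ ≤ ‖x - 1‖ :=
      ih.trans (mul_le_of_le_one_left (norm_nonneg _) (pow_le_one₀ (by positivity) hc))
    calc ‖x ^ q ^ (k + 1) - 1‖ = ‖(x ^ q ^ k) ^ q - 1‖ := by rw [pow_succ, pow_mul]
      _ ≤ max ‖(q : K)‖ ‖x - 1‖ * ‖x ^ q ^ k - 1‖ := norm_pow_sub_one_le_max_mul hk hx q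
      _ ≤ max ‖(q : K)‖ ‖x - 1‖ * (max ‖(q : K)‖ ‖x - 1‖ ^ k * ‖x - 1‖) :=
        mul_le_mul_of_nonneg_left ih (by positivity)
      _ = max ‖(q : K)‖ ‖x - 1‖ ^ (k + 1) * ‖x - 1‖ := by ring

theorem tendsto_pow_pow_nhds_one {x : K} (hx : ‖x - 1‖ < 1) {q : ℕ} (hq : ‖(q : K)‖ < 1) :
    Tendsto (fun k => x ^ q ^ k) atTop (𝓝 1) := by
  have hc : Tendsto (fun k => max ‖(q : K)‖ ‖x - 1‖ ^ k * ‖x - 1‖) atTop (𝓝 0) := by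
    simpa using (tendsto_pow_atTop_nhds_zero_of_lt_one (by positivity) (max_lt hq hx)).mul_const
      ‖x - 1‖
  exact tendsto_iff_norm_sub_tendsto_zero.mpr <| squeeze_zero (fun _ => norm_nonneg _)
    (norm_pow_pow_sub_one_le hx.le q) hc

end PowNearOne

theorem exists_pow_norm_sub_one_lt {K : Type*} [NormedDivisionRing K] [ProperSpace K] {u : K}
    (hu : ‖u‖ = 1) {δ : ℝ} (hδ : 0 < δ) : ∃ m : ℕ, 0 < m ∧ ‖u ^ m - 1‖ < δ := by
  obtain ⟨z, -, φ, hφ, hz⟩ := (isCompact_sphere (0 : K) 1).tendsto_subseq (x := (u ^ ·))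
    fun n => by simp [norm_pow, hu]
  obtain ⟨N, hN⟩ := Metric.tendsto_atTop.mp hz (δ / 2) (half_pos hδ)
  have hlt : φ N < φ (N + 1) := hφ N.lt_succ_self
  refine ⟨φ (N + 1) - φ N, Nat.sub_pos_of_lt hlt, ?_⟩
  have hfactor : u ^ φ (N + 1) - u ^ φ N = u ^ φ N * (u ^ (φ (N + 1) - φ N) - 1) := by
    rw [mul_sub, mul_one, ← pow_add, Nat.add_sub_cancel' hlt.le]
  calc ‖u ^ (φ (N + 1) - φ N) - 1‖ = dist (u ^ φ (N + 1)) (u ^ φ N) := by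
        rw [dist_eq_norm, hfactor, norm_mul, norm_pow, hu, one_pow, one_mul]
    _ ≤ dist (u ^ φ (N + 1)) z + dist (u ^ φ N) z := dist_triangle_right _ _ _
    _ < δ / 2 + δ / 2 := add_lt_add (hN _ N.le_succ) (hN _ le_rfl)
    _ = δ := add_halves δ

section AdditiveCharacter

variable {G A : Type*} [Group G] [AddGroup A] {ρ : G → A}

theorem map_pow_of_map_mul (hρ : ∀ x y, ρ (x * y) = ρ x + ρ y) (x : G) (n : ℕ) :
    ρ (x ^ n) = n • ρ x :=
  (AddMonoidHom.mk' (ρ ∘ Additive.toMul) fun _ _ => hρ _ _).map_nsmul n (Additive.ofMul x)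

theorem map_zpow_of_map_mul (hρ : ∀ x y, ρ (x * y) = ρ x + ρ y) (x : G) (n : ℤ) :
    ρ (x ^ n) = n • ρ x :=
  (AddMonoidHom.mk' (ρ ∘ Additive.toMul) fun _ _ => hρ _ _).map_zsmul n (Additive.ofMul x)

end AdditiveCharacter

theorem map_eq_zero_of_norm_eq_one {K F : Type*} [NormedDivisionRing K] [IsUltrametricDist K]
    [ProperSpace K] [NormedField F] [CharZero F] {q : ℕ} (hqK : ‖(q : K)‖ < 1)
    (hqF : ‖(q : F)‖ = 1) {ρ : Kˣ → F} (hcont : Continuous ρ)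
    (hρ : ∀ x y, ρ (x * y) = ρ x + ρ y) {u : Kˣ} (hu : ‖(u : K)‖ = 1) : ρ u = 0 := by
  obtain ⟨m, hm, hum⟩ := exists_pow_norm_sub_one_lt hu one_pos
  have hlim : Tendsto (fun k => (u ^ m) ^ q ^ k) atTop (𝓝 1) :=
    Units.isEmbedding_val₀.tendsto_nhds_iff.mpr <| by
      simpa [Function.comp_def] using tendsto_pow_pow_nhds_one hum hqK
  have hρ1 : ρ 1 = 0 := by simpa using map_pow_of_map_mul hρ 1 0
  have hnorm : ∀ k, ‖ρ ((u ^ m) ^ q ^ k)‖ = ‖(m : F) * ρ u‖ := fun k => by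
    rw [map_pow_of_map_mul hρ, map_pow_of_map_mul hρ, nsmul_eq_mul, nsmul_eq_mul, norm_mul,
      Nat.cast_pow, norm_pow, hqF, one_pow, one_mul]
  have hconst : Tendsto (fun _ : ℕ => ‖(m : F) * ρ u‖) atTop (𝓝 0) := by
    simpa [hnorm, hρ1] using ((hcont.tendsto 1).comp hlim).norm
  simpa [hm.ne'] using tendsto_const_nhds_iff.mp hconst

theorem continuous_hom_eq_zero_of_vanishes_on_uniformizer_general
    {p ℓ : ℕ} [Fact p.Prime] [Fact ℓ.Prime] (hpl : p ≠ ℓ)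
    (K : Type*) [NormedField K] [Algebra ℚ_[ℓ] K] [FiniteDimensional ℚ_[ℓ] K]
    (hK : ∀ a : ℚ_[ℓ], ‖algebraMap ℚ_[ℓ] K a‖ = ‖a‖)
    (ρ : Kˣ → ℚ_[p]) (hρ_cont : Continuous ρ)
    (hρ_add : ∀ x y : Kˣ, ρ (x * y) = ρ x + ρ y)
    (π : Kˣ)
    (hπ_gen : ∀ x : Kˣ, ∃ n : ℤ, ‖(x : K)‖ = ‖(π : K)‖ ^ n)
    (hρπ : ρ π = 0) :
    ∀ x : Kˣ, ρ x = 0 := by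
  have := isUltrametricDist_of_norm_algebraMap hK
  have := properSpace_of_norm_algebraMap hK
  have hℓK : ‖(ℓ : K)‖ < 1 := by
    rw [← map_natCast (algebraMap ℚ_[ℓ] K), hK]
    exact Padic.norm_p_lt_one
  have hℓp : ‖(ℓ : ℚ_[p])‖ = 1 :=
    Padic.norm_natCast_eq_one_iff.mpr ((Nat.coprime_primes Fact.out Fact.out).mpr hpl)
  intro x
  obtain ⟨n, hn⟩ := hπ_gen x
  have hu : ‖((x * (π ^ n)⁻¹ : Kˣ) : K)‖ = 1 := by
    rw [Units.val_mul, norm_mul, hn, Units.val_inv_eq_inv_val, norm_inv, Units.val_zpow_eq_zpow_val,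
      norm_zpow]
    exact mul_inv_cancel₀ (zpow_ne_zero n (norm_ne_zero_iff.mpr π.ne_zero))
  calc ρ x = ρ (x * (π ^ n)⁻¹ * π ^ n) := by rw [inv_mul_cancel_right]
    _ = 0 := by
      rw [hρ_add, map_eq_zero_of_norm_eq_one hℓK hℓp hρ_cont hρ_add hu,
        map_zpow_of_map_mul hρ_add, hρπ, smul_zero, add_zero]

/-- For distinct primes `p ≠ ℓ` and `K` a finite extension of `ℚ_ℓ`, a continuous
homomorphism `ρ : Kˣ → ℚ_p` vanishing on some uniformizer `π` (an element with
`0 < ‖π‖ < 1` generating the value group) is identically zero. -/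
theorem continuous_hom_eq_zero_of_vanishes_on_uniformizer
    {p ℓ : ℕ} [Fact p.Prime] [Fact ℓ.Prime] (hpl : p ≠ ℓ)
    (K : Type*) [NormedField K] [Algebra ℚ_[ℓ] K] [FiniteDimensional ℚ_[ℓ] K]
    (hK : ∀ a : ℚ_[ℓ], ‖algebraMap ℚ_[ℓ] K a‖ = ‖a‖)
    (ρ : Kˣ → ℚ_[p]) (hρ_cont : Continuous ρ)
    (hρ_add : ∀ x y : Kˣ, ρ (x * y) = ρ x + ρ y)
    (π : Kˣ) (hπ_pos : 0 < ‖(π : K)‖) (hπ_lt : ‖(π : K)‖ < 1)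
    (hπ_gen : ∀ x : Kˣ, ∃ n : ℤ, ‖(x : K)‖ = ‖(π : K)‖ ^ n)
    (hρπ : ρ π = 0) :
    ∀ x : Kˣ, ρ x = 0 :=
  continuous_hom_eq_zero_of_vanishes_on_uniformizer_general hpl K hK ρ hρ_cont hρ_add π hπ_gen hρπ
end
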